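/- Processed recursion inequality: there exist constants K > 0 depending only on K₂, L₁, L₂, K' > 0 depending only on K₄, and K'' > 0 depending only on K₃, K₅, and a constant M > 0 depending only on K₁,…,K₅, L₁, L₂, C₀, r such that the following holds. If t₀ ≥ ⌈M(p·log(max(p,3)) + x)⌉ and assumptions (A1), (A2), (A4), (A5) hold, then there are a nonnegative sequence (ε_t)_{t ≥ t₀} and a real sequence (u_t)_{t > t₀} with: V_{t+1} ≤ V_t + ε_t V_t^{3/2} + u_{t+1} for all t ∈ ℕ with t₀ ≤ t < t_exit; Σ_{r=s}^{t} ε_r ≤ K s^{−1/2} and Σ_{r=t₀+1}^{t} u_r ≤ K' p log t + K''(x + log t) for all s, t ∈ ℕ with t₀ ≤ s < t ≤ t_exit. -/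

import Mathlib

open Matrix MeasureTheory Real
open scoped RealInnerProductSpace BigOperators ENNReal

noncomputable section

/-- Vectors in `ℝ^p` with the Euclidean (`ℓ²`) norm. -/
abbrev Vec (p : ℕ) := EuclideanSpace ℝ (Fin p)

/-- Real `p × p` matrices. -/
abbrev Mat (p : ℕ) := Matrix (Fin p) (Fin p) ℝ

/-- A matrix applied to a Euclidean vector. -/
def mApp {p : ℕ} (A : Mat p) (v : Vec p) : Vec p := Matrix.toEuclideanLin A v

/-- The quadratic form `vᵀ A v`. For positive semidefinite `A` this equals
`‖A^{1/2} v‖₂²`. -/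
def quadForm {p : ℕ} (A : Mat p) (v : Vec p) : ℝ := ⟪v, mApp A v⟫

/-- The `ℓ² → ℓ²` operator (spectral) norm of a matrix. -/
def specNorm {p : ℕ} (A : Mat p) : ℝ :=
  ‖LinearMap.toContinuousLinearMap (Matrix.toEuclideanLin A)‖

/-- The exit time `t_exit = inf {t ∈ ℕ : t > t₀, θ_t ∉ Θ_r}`, valued in `ℕ∞`
(with `inf ∅ = ∞`). -/
def texit {p : ℕ} (θstar : Vec p) (r : ℝ) (t₀ : ℕ) (θ : ℕ → Vec p) : ℕ∞ :=
  sInf {n : ℕ∞ | ∃ t : ℕ, n = (t : ℕ∞) ∧ t₀ < t ∧ r < ‖θ t - θstar‖}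

/-!
Write `δ = θ_t - θ⋆` and `q(w) = ∇²ℓ_{t+1}(θ⋆ + w δ)[δ]`. Expanding the Newton update gives
`V_{t+1} = V_t + q(1) - 2⟪g_{t+1}, δ⟫ + Ω_{t+1}⁻¹[g_{t+1}]`, and Taylor's formula with integral
remainder from `θ_t` to `θ⋆` rewrites this as `V_{t+1} = V_t + (q(1) - 2∫₀¹ w q(w) dw) + u_{t+1}`
with `u_{t+1} = 2(ℓ_{t+1}(θ⋆) - ℓ_{t+1}(θ_t)) + Ω_{t+1}⁻¹[g_{t+1}]`, whose partial sums are what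
(A4) controls.

(A2), applied between `θ_t` and each point `θ⋆ + u δ` of the segment, bounds `q(1)` by the tail
average `2 (1 - u)⁻² ∫ᵤ¹ (1 - w) q(w) dw` up to `L₁ L₂ ‖δ‖³`; integrating these bounds in `u`
against the weight `(1 - u)⁻²` gives `q(1) ≤ 2∫₀¹ w q(w) dw + L₁ L₂ ‖δ‖³`. Before the exit time
(A1) gives `V_t ≥ K₂ t ‖δ‖²`, hence `L₁ L₂ ‖δ‖³ ≤ ε_t V_t^{3/2}` with `ε_t = L₁ L₂ (K₂ t)^{-3/2}`,
and `∑_{r ≥ s} r^{-3/2} ≤ 3 s^{-1/2}`.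
-/

open Set Filter Topology

-- The right-hand side is a primitive of `(2 ∫ᵤ¹ (1 - w) f w - a (1 - u)²) / (1 - u)² ≥ 0`.
lemma tail_average_primitive_nonneg {f : ℝ → ℝ} (hf : Continuous f) {a : ℝ}
    (h : ∀ u ∈ Ico (0 : ℝ) 1, a * (1 - u) ^ 2 ≤ 2 * ∫ w in u..1, (1 - w) * f w)
    {b : ℝ} (hb : b ∈ Ico (0 : ℝ) 1) :
    0 ≤ b * (2 * (∫ w in b..1, (1 - w) * f w) - a * (1 - b) ^ 2) / (1 - b)
      + 2 * ∫ w in (0 : ℝ)..b, w * (f w - a) := by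
  set D : ℝ → ℝ := fun u => 2 * (∫ w in u..1, (1 - w) * f w) - a * (1 - u) ^ 2
  set Ψ : ℝ → ℝ := fun u => u * D u / (1 - u) + 2 * ∫ w in (0 : ℝ)..u, w * (f w - a)
  have hΨ : ∀ u < 1, HasDerivAt Ψ (D u / (1 - u) ^ 2) u := fun u hu => by
    have hu' : 1 - u ≠ 0 := by linarith
    have hlin : HasDerivAt (fun u : ℝ => 1 - u) (-1) u := (hasDerivAt_id u).const_sub 1
    have hG : HasDerivAt (fun u => ∫ w in u..1, (1 - w) * f w) (-((1 - u) * f u)) u :=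
      have hc : Continuous fun w => (1 - w) * f w := by fun_prop
      intervalIntegral.integral_hasDerivAt_left (hc.intervalIntegrable _ _)
        (hc.stronglyMeasurableAtFilter _ _) hc.continuousAt
    have hD : HasDerivAt D (2 * -((1 - u) * f u) - a * (2 * (1 - u) * -1)) u :=
      ((hG.const_mul 2).sub ((hlin.pow 2).const_mul a)).congr_deriv (by norm_num)
    have hI := ((by fun_prop : Continuous fun w => w * (f w - a)).integral_hasStrictDerivAt 0 u)
      |>.hasDerivAt
    refine ((((hasDerivAt_id u).mul hD).div hlin hu').add (hI.const_mul 2)).congr_deriv ?_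
    simp only [id, D, Pi.mul_apply]
    field_simp
    ring
  have hmono : MonotoneOn Ψ (Ico 0 1) := by
    refine monotoneOn_of_hasDerivWithinAt_nonneg (f' := fun u => D u / (1 - u) ^ 2)
      (convex_Ico 0 1) (fun u hu => (hΨ u hu.2).continuousAt.continuousWithinAt)
      (fun u hu => ?_) (fun u hu => ?_)
    all_goals rw [interior_Ico] at hu
    · exact (hΨ u hu.2).hasDerivWithinAt
    · exact div_nonneg (sub_nonneg.2 (h u (Ioo_subset_Ico_self hu))) (sq_nonneg _)
  have := hmono ⟨le_rfl, zero_lt_one⟩ hb hb.1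
  simpa [Ψ] using this

lemma integral_mul_sub_ge_of_le_tail_averages {f : ℝ → ℝ} (hf : Continuous f) {a B : ℝ}
    (hB : ∀ w ∈ Icc (0 : ℝ) 1, ‖f w‖ ≤ B)
    (h : ∀ u ∈ Ico (0 : ℝ) 1, a * (1 - u) ^ 2 ≤ 2 * ∫ w in u..1, (1 - w) * f w)
    {b : ℝ} (hb : b ∈ Ico (0 : ℝ) 1) :
    0 ≤ (2 * B + |a|) * (1 - b) + 2 * ∫ w in (0 : ℝ)..b, w * (f w - a) := by
  have h1b : 0 < 1 - b := by linarith [hb.2]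
  set G := ∫ w in b..1, (1 - w) * f w
  have hG : |G| ≤ (1 - b) * B * |1 - b| := by
    rw [← Real.norm_eq_abs]
    refine intervalIntegral.norm_integral_le_of_norm_le_const fun w hw => ?_
    rw [uIoc_of_le hb.2.le] at hw
    rw [norm_mul, Real.norm_eq_abs, abs_of_nonneg (by linarith [hw.2])]
    exact mul_le_mul (by linarith [hw.1]) (hB w ⟨by linarith [hb.1, hw.1], hw.2⟩)
      (norm_nonneg _) h1b.le
  rw [abs_of_pos h1b] at hG
  have hD : 0 ≤ 2 * G - a * (1 - b) ^ 2 := sub_nonneg.2 (h b hb)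
  have hDb : b * (2 * G - a * (1 - b) ^ 2) / (1 - b) ≤ (2 * B + |a|) * (1 - b) := by
    rw [div_le_iff₀ h1b]
    have := mul_le_mul_of_nonneg_right (neg_le_abs a) (sq_nonneg (1 - b))
    nlinarith [mul_le_of_le_one_left hD hb.2.le, le_abs_self G]
  linarith [tail_average_primitive_nonneg hf h hb]

-- The weight `(1 - u)⁻²` is not integrable up to `1`: integrate up to `b < 1`, then let `b → 1`.
lemma le_weighted_average_of_le_tail_averages {f : ℝ → ℝ} (hf : Continuous f) {a : ℝ}
    (h : ∀ u ∈ Ico (0 : ℝ) 1, a * (1 - u) ^ 2 ≤ 2 * ∫ w in u..1, (1 - w) * f w) :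
    a ≤ 2 * ∫ w in (0 : ℝ)..1, w * f w := by
  obtain ⟨B, hB⟩ := (isCompact_Icc (a := (0 : ℝ)) (b := 1)).exists_bound_of_continuousOn
    hf.continuousOn
  set F : ℝ → ℝ := fun b => (2 * B + |a|) * (1 - b) + 2 * ∫ w in (0 : ℝ)..b, w * (f w - a)
  have hFc : Continuous F := by
    have := intervalIntegral.continuous_primitive (μ := volume)
      (fun _ _ => (by fun_prop : Continuous fun w => w * (f w - a)).intervalIntegrable _ _) 0
    fun_prop
  have hF1 : 0 ≤ F 1 := by
    have : Icc (0 : ℝ) 1 ⊆ {b | 0 ≤ F b} := by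
      rw [← closure_Ico zero_ne_one]
      exact closure_minimal (fun b hb => integral_mul_sub_ge_of_le_tail_averages hf hB h hb)
        (isClosed_le continuous_const hFc)
    exact this ⟨zero_le_one, le_rfl⟩
  have hI : ∫ w in (0 : ℝ)..1, w * (f w - a) = (∫ w in (0 : ℝ)..1, w * f w) - a / 2 := by
    simp only [mul_sub]
    rw [intervalIntegral.integral_sub
      ((by fun_prop : Continuous fun w => w * f w).intervalIntegrable _ _)
      ((by fun_prop : Continuous fun w : ℝ => w * a).intervalIntegrable _ _),
      intervalIntegral.integral_mul_const, integral_id]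
    ring
  simp only [F, sub_self, mul_zero, zero_add, hI] at hF1
  linarith

lemma rpow_three_halves_eq_mul_sqrt {x : ℝ} (hx : 0 ≤ x) : x ^ (3 / 2 : ℝ) = x * √x := by
  rw [show (3 / 2 : ℝ) = 1 + 1 / 2 by norm_num, rpow_add' hx (by norm_num), rpow_one,
    sqrt_eq_rpow]

lemma pow_three_le_rpow_div {c d V : ℝ} (hc : 0 < c) (hd : 0 ≤ d) (h : c * d ^ 2 ≤ V) :
    d ^ 3 ≤ V ^ (3 / 2 : ℝ) / c ^ (3 / 2 : ℝ) := by
  have hd3 : d ^ 3 = (d ^ 2) ^ (3 / 2 : ℝ) := by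
    rw [← rpow_natCast, ← rpow_natCast, ← rpow_mul hd]; norm_num
  rw [le_div_iff₀ (by positivity), hd3, mul_comm, ← mul_rpow hc.le (by positivity)]
  exact rpow_le_rpow (by positivity) h (by norm_num)

lemma one_div_rpow_three_halves_le_sub {n : ℝ} (hn : 0 < n) :
    1 / (n + 1) ^ (3 / 2 : ℝ) ≤ 2 / √n - 2 / √(n + 1) := by
  have ha := sqrt_pos.2 hn
  have hb := sqrt_pos.2 (by linarith : 0 < n + 1)
  have hab : √n ≤ √(n + 1) := sqrt_le_sqrt (by linarith)
  have hsq : √(n + 1) ^ 2 - √n ^ 2 = 1 := by rw [sq_sqrt hn.le, sq_sqrt (by linarith)]; ring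
  rw [rpow_three_halves_eq_mul_sqrt (by linarith), ← sq_sqrt (by linarith : (0 : ℝ) ≤ n + 1),
    sqrt_sq hb.le, div_sub_div _ _ ha.ne' hb.ne', div_le_div_iff₀ (by positivity) (by positivity)]
  nlinarith [mul_nonneg (sub_nonneg.2 hab) (sub_nonneg.2 hab), mul_pos ha hb,
    mul_nonneg (mul_nonneg (sub_nonneg.2 hab) hb.le) hb.le]

lemma sum_Icc_one_div_rpow_three_halves_le {s : ℕ} (hs : 1 ≤ s) (t : ℕ) :
    ∑ r ∈ Finset.Icc s t, 1 / (r : ℝ) ^ (3 / 2 : ℝ) ≤ 3 / √s := by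
  have hs' : (1 : ℝ) ≤ s := by exact_mod_cast hs
  rcases lt_or_ge t s with hts | hst
  · rw [Finset.Icc_eq_empty_of_lt hts, Finset.sum_empty]; positivity
  suffices ∑ r ∈ Finset.Icc s t, 1 / (r : ℝ) ^ (3 / 2 : ℝ) ≤ 3 / √s - 2 / √t by
    linarith [show 0 ≤ 2 / √(t : ℝ) by positivity]
  induction t, hst using Nat.le_induction with
  | base =>
    rw [Finset.Icc_self, Finset.sum_singleton, rpow_three_halves_eq_mul_sqrt (by linarith)]
    have := sqrt_pos.2 (by linarith : (0 : ℝ) < s)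
    rw [div_le_iff₀ (by positivity)]
    field_simp
    nlinarith
  | succ t hst ih =>
    have ht : (0 : ℝ) < t := by exact_mod_cast hs.trans hst
    rw [Finset.sum_Icc_succ_top (by omega), Nat.cast_succ]
    linarith [one_div_rpow_three_halves_le_sub ht]

section

variable {p : ℕ}

lemma quadForm_eq_dotProduct (A : Mat p) (v : Vec p) :
    quadForm A v = WithLp.ofLp v ⬝ᵥ A *ᵥ WithLp.ofLp v := by
  simp [quadForm, mApp, Matrix.toLpLin_apply, PiLp.inner_apply, dotProduct, mul_comm]

lemma quadForm_add (A B : Mat p) (v : Vec p) :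
    quadForm (A + B) v = quadForm A v + quadForm B v := by
  simp [quadForm, mApp, inner_add_right]

lemma quadForm_sub (A B : Mat p) (v : Vec p) :
    quadForm (A - B) v = quadForm A v - quadForm B v := by
  simp [quadForm, mApp, inner_sub_right]

lemma quadForm_smul (c : ℝ) (A : Mat p) (v : Vec p) : quadForm (c • A) v = c * quadForm A v := by
  simp [quadForm, mApp, inner_smul_right]

lemma quadForm_smul_right (A : Mat p) (c : ℝ) (v : Vec p) :
    quadForm A (c • v) = c ^ 2 * quadForm A v := by
  simp only [quadForm, mApp, map_smul, inner_smul_right, inner_smul_left, ringHom_apply]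
  ring

lemma Matrix.PosSemidef.quadForm_nonneg {A : Mat p} (hA : A.PosSemidef) (v : Vec p) :
    0 ≤ quadForm A v := by
  rw [quadForm_eq_dotProduct]; exact hA.dotProduct_mulVec_nonneg _

lemma Matrix.PosDef.quadForm_pos {A : Mat p} (hA : A.PosDef) {v : Vec p} (hv : v ≠ 0) :
    0 < quadForm A v := by
  rw [quadForm_eq_dotProduct]; exact hA.dotProduct_mulVec_pos (by simpa using hv)

lemma Matrix.IsHermitian.posDef_of_quadForm_pos {A : Mat p} (hA : A.IsHermitian)
    (h : ∀ v : Vec p, v ≠ 0 → 0 < quadForm A v) : A.PosDef :=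
  .of_dotProduct_mulVec_pos hA fun x hx => by
    simpa [quadForm_eq_dotProduct] using h (WithLp.toLp 2 x) (by simpa using hx)

lemma quadForm_le_of_posSemidef_sub {A B : Mat p} (h : (B - A).PosSemidef) (v : Vec p) :
    quadForm A v ≤ quadForm B v := by
  have := h.quadForm_nonneg v
  rw [quadForm_sub] at this; linarith

lemma abs_quadForm_le (A : Mat p) (v : Vec p) : |quadForm A v| ≤ specNorm A * ‖v‖ ^ 2 :=
  calc |quadForm A v| ≤ ‖v‖ * ‖mApp A v‖ := abs_real_inner_le_norm _ _
    _ ≤ ‖v‖ * (specNorm A * ‖v‖) := by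
      gcongr; exact (LinearMap.toContinuousLinearMap (Matrix.toEuclideanLin A)).le_opNorm v
    _ = specNorm A * ‖v‖ ^ 2 := by ring

lemma continuous_quadForm_left (v : Vec p) : Continuous fun A : Mat p => quadForm A v := by
  simp only [quadForm_eq_dotProduct]
  fun_prop

lemma quadForm_sub_mApp_inv {Ω : Mat p} (hΩ : Ω.PosDef) (δ g : Vec p) :
    quadForm Ω (δ - mApp Ω⁻¹ g) = quadForm Ω δ - 2 * ⟪g, δ⟫ + quadForm Ω⁻¹ g := by
  have hinv : mApp Ω (mApp Ω⁻¹ g) = g := by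
    simp [mApp, Matrix.toLpLin_apply, Matrix.mulVec_mulVec,
      Matrix.mul_nonsing_inv Ω (isUnit_iff_ne_zero.mpr hΩ.det_pos.ne')]
  have hsymm : ∀ x y : Vec p, ⟪x, mApp Ω y⟫ = ⟪mApp Ω x, y⟫ := fun x y =>
    (Matrix.isSymmetric_toEuclideanLin_iff.mpr hΩ.isHermitian x y).symm
  have hcross : ⟪mApp Ω⁻¹ g, mApp Ω δ⟫ = ⟪g, δ⟫ := by rw [hsymm, hinv]
  simp only [quadForm, mApp, map_sub] at hinv hcross ⊢
  rw [hinv, inner_sub_left, inner_sub_right, inner_sub_right, hcross, real_inner_comm δ g,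
    real_inner_comm g (toEuclideanLin Ω⁻¹ g)]
  ring

section Calculus

variable {f : Vec p → ℝ} {gr : Vec p → Vec p} {H : Vec p → Mat p}

lemma hasFDerivAt_innerSL_of_hasGradientAt (h : ∀ y, HasGradientAt f (gr y) y) (y : Vec p) :
    HasFDerivAt f (innerSL ℝ (gr y)) y := by
  have : innerSL ℝ (gr y) = InnerProductSpace.toDual ℝ (Vec p) (gr y) := rfl
  exact this ▸ (h y).hasFDerivAt

lemma isHermitian_of_hasFDerivAt_gradient (h₁ : ∀ y, HasGradientAt f (gr y) y)
    (h₂ : ∀ y, HasFDerivAt gr (LinearMap.toContinuousLinearMap (Matrix.toEuclideanLin (H y))) y)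
    (y : Vec p) : (H y).IsHermitian := by
  have hsymm := second_derivative_symmetric (hasFDerivAt_innerSL_of_hasGradientAt h₁)
    ((innerSL ℝ (E := Vec p)).hasFDerivAt.comp y (h₂ y))
  refine Matrix.isSymmetric_toEuclideanLin_iff.mp fun v w => ?_
  calc ⟪toEuclideanLin (H y) v, w⟫ = ⟪toEuclideanLin (H y) w, v⟫ := hsymm v w
    _ = ⟪v, toEuclideanLin (H y) w⟫ := real_inner_comm _ _

lemma taylor_integral_segment (h₁ : ∀ y, HasGradientAt f (gr y) y)
    (h₂ : ∀ y, HasFDerivAt gr (LinearMap.toContinuousLinearMap (Matrix.toEuclideanLin (H y))) y)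
    (hH : Continuous H) (a δ : Vec p) (u b : ℝ) :
    f (a + b • δ) = f (a + u • δ) + (b - u) * ⟪gr (a + u • δ), δ⟫
      + ∫ w in u..b, (b - w) * quadForm (H (a + w • δ)) δ := by
  have hγ : ∀ w : ℝ, HasDerivAt (fun w : ℝ => a + w • δ) δ w := fun w => by
    simpa using ((hasDerivAt_id w).smul_const δ).const_add a
  have hF : ∀ w : ℝ, HasDerivAt (fun w => f (a + w • δ) + (b - w) * ⟪gr (a + w • δ), δ⟫)
      ((b - w) * quadForm (H (a + w • δ)) δ) w := fun w => by
    have hf := (hasFDerivAt_innerSL_of_hasGradientAt h₁ _).comp_hasDerivAt w (hγ w)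
    have hg := ((h₂ _).comp_hasDerivAt w (hγ w)).inner ℝ (hasDerivAt_const w δ)
    refine (hf.add (((hasDerivAt_id w).const_sub b).mul hg)).congr_deriv ?_
    simp only [Function.comp_apply, innerSL_apply_apply, inner_zero_right, zero_add, quadForm,
      mApp, LinearMap.coe_toContinuousLinearMap', real_inner_comm δ, id]
    ring
  have hcont : Continuous fun w : ℝ => (b - w) * quadForm (H (a + w • δ)) δ :=
    (continuous_const.sub continuous_id).mul
      ((continuous_quadForm_left δ).comp (hH.comp (by fun_prop)))
  rw [intervalIntegral.integral_eq_sub_of_hasDerivAt (fun w _ => hF w)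
    (hcont.intervalIntegrable u b)]
  ring

end Calculus

section Newton

def TaylorCurvatureComparable (f : Vec p → ℝ) (gr : Vec p → Vec p) (H : Vec p → Mat p)
    (θstar : Vec p) (r L₁ : ℝ) : Prop :=
  ∀ θ₁ θ₂ : Vec p, ‖θ₁ - θstar‖ ≤ r → ‖θ₂ - θstar‖ ≤ r →
    ∃ φ : ℝ, 0 ≤ φ ∧ φ ≤ L₁ * ‖θ₁ - θ₂‖ ∧ ∃ c ∈ Set.Icc (0 : ℝ) 1,
      f θ₁ = f θ₂ + ⟪gr θ₂, θ₁ - θ₂⟫ + (1 / 2) * quadForm (H (θ₂ + c • (θ₁ - θ₂))) (θ₁ - θ₂) ∧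
      ((1 + φ) • H (θ₂ + c • (θ₁ - θ₂)) - H θ₁).PosSemidef

variable {f : Vec p → ℝ} {gr : Vec p → Vec p} {H : Vec p → Mat p} {θstar y : Vec p}
  {r L₁ L₂ : ℝ}

lemma quadForm_hessian_le_integral (h₁ : ∀ y, HasGradientAt f (gr y) y)
    (h₂ : ∀ y, HasFDerivAt gr (LinearMap.toContinuousLinearMap (Matrix.toEuclideanLin (H y))) y)
    (hH : Continuous H) (hL₁ : 0 ≤ L₁)
    (hA2 : TaylorCurvatureComparable f gr H θstar r L₁)
    (hspec : ∀ z : Vec p, ‖z - θstar‖ ≤ r → specNorm (H z) ≤ L₂) (hy : ‖y - θstar‖ ≤ r) :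
    quadForm (H y) (y - θstar) ≤
      2 * (∫ w in (0 : ℝ)..1, w * quadForm (H (θstar + w • (y - θstar))) (y - θstar))
        + L₁ * L₂ * ‖y - θstar‖ ^ 3 := by
  set δ := y - θstar
  have hyδ : y = θstar + (1 : ℝ) • δ := by simp [δ]
  have hseg : ∀ w ∈ Icc (0 : ℝ) 1, ‖θstar + w • δ - θstar‖ ≤ r := fun w hw => by
    rw [add_sub_cancel_left, norm_smul, Real.norm_eq_abs, abs_of_nonneg hw.1]
    exact (mul_le_of_le_one_left (norm_nonneg _) hw.2).trans hy
  -- compare `H y` with the Taylor point of the segment from `θstar + u • δ` to `y`, for each `u`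
  suffices h : ∀ u ∈ Ico (0 : ℝ) 1, (quadForm (H y) δ - L₁ * L₂ * ‖δ‖ ^ 3) * (1 - u) ^ 2 ≤
      2 * ∫ w in u..1, (1 - w) * quadForm (H (θstar + w • δ)) δ by
    have := le_weighted_average_of_le_tail_averages
      ((continuous_quadForm_left δ).comp (hH.comp (by fun_prop))) h
    simp only [Function.comp_apply] at this
    linarith
  intro u hu
  obtain ⟨φ, hφ0, hφ, c, hc, htaylor, hcmp⟩ :=
    hA2 y (θstar + u • δ) hy (hseg u (Ico_subset_Icc_self hu))
  have hdiff : y - (θstar + u • δ) = (1 - u) • δ := by rw [hyδ]; module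
  have hmid : θstar + u • δ + c • (1 - u) • δ = θstar + (u + c * (1 - u)) • δ := by module
  rw [hdiff, hmid] at htaylor hcmp
  rw [hdiff] at hφ
  set q := quadForm (H (θstar + (u + c * (1 - u)) • δ)) δ
  have hq : (1 - u) ^ 2 * q = 2 * ∫ w in u..1, (1 - w) * quadForm (H (θstar + w • δ)) δ := by
    have := taylor_integral_segment h₁ h₂ hH θstar δ u 1
    rw [← hyδ, htaylor, quadForm_smul_right, inner_smul_right] at this
    linarith
  have hφq : φ * q ≤ L₁ * L₂ * ‖δ‖ ^ 3 := by
    have hmid_mem : u + c * (1 - u) ∈ Icc (0 : ℝ) 1 := ⟨by nlinarith [hu.1, hu.2, hc.1],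
      by nlinarith [hu.1, hu.2, hc.2]⟩
    have hq_le : |q| ≤ L₂ * ‖δ‖ ^ 2 := (abs_quadForm_le _ _).trans
      (mul_le_mul_of_nonneg_right (hspec _ (hseg _ hmid_mem)) (sq_nonneg _))
    have hφ' : φ ≤ L₁ * ‖δ‖ := hφ.trans (mul_le_mul_of_nonneg_left (by
      rw [norm_smul, Real.norm_eq_abs, abs_of_pos (by linarith [hu.2])]
      exact mul_le_of_le_one_left (norm_nonneg _) (by linarith [hu.1])) hL₁)
    calc φ * q ≤ φ * |q| := mul_le_mul_of_nonneg_left (le_abs_self q) hφ0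
      _ ≤ (L₁ * ‖δ‖) * (L₂ * ‖δ‖ ^ 2) := mul_le_mul hφ' hq_le (abs_nonneg _) (by positivity)
      _ = L₁ * L₂ * ‖δ‖ ^ 3 := by ring
  have hHy : quadForm (H y) δ ≤ (1 + φ) * q := by
    simpa [quadForm_smul, q] using quadForm_le_of_posSemidef_sub hcmp δ
  rw [← hq, mul_comm _ q]
  exact mul_le_mul_of_nonneg_right (by linarith) (sq_nonneg _)

lemma quadForm_newtonStep_le (h₁ : ∀ y, HasGradientAt f (gr y) y)
    (h₂ : ∀ y, HasFDerivAt gr (LinearMap.toContinuousLinearMap (Matrix.toEuclideanLin (H y))) y)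
    (hH : Continuous H) (hL₁ : 0 ≤ L₁)
    (hA2 : TaylorCurvatureComparable f gr H θstar r L₁)
    (hspec : ∀ z : Vec p, ‖z - θstar‖ ≤ r → specNorm (H z) ≤ L₂) (hy : ‖y - θstar‖ ≤ r)
    {Ω : Mat p} (hΩ : (Ω + H y).PosDef) :
    quadForm (Ω + H y) (y - mApp (Ω + H y)⁻¹ (gr y) - θstar) ≤
      quadForm Ω (y - θstar) + L₁ * L₂ * ‖y - θstar‖ ^ 3
        + (2 * (f θstar - f y) + quadForm (Ω + H y)⁻¹ (gr y)) := by
  have htaylor := taylor_integral_segment h₁ h₂ hH θstar (y - θstar) 1 0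
  simp only [zero_smul, add_zero, one_smul, add_sub_cancel, zero_sub, neg_mul, one_mul,
    intervalIntegral.integral_symm 0 1, intervalIntegral.integral_neg, neg_neg] at htaylor
  have hbound := quadForm_hessian_le_integral h₁ h₂ hH hL₁ hA2 hspec hy
  rw [sub_right_comm, quadForm_sub_mApp_inv hΩ, quadForm_add]
  linarith

end Newton

section Algorithm

def HessianSumLowerBound (hess : ℕ → Vec p → Mat p) (θstar : Vec p) (r T K₂ : ℝ) : Prop :=
  ∀ t : ℕ, T ≤ (t : ℝ) → ∀ θbar : ℕ → Vec p, (∀ s ∈ Finset.Icc 1 t, ‖θbar s - θstar‖ ≤ r) →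
    ∀ v : Vec p, K₂ * t * ‖v‖ ^ 2 ≤ quadForm (∑ s ∈ Finset.Icc 1 t, hess s (θbar s)) v

variable {θstar : Vec p} {r : ℝ} {t₀ : ℕ} {θ : ℕ → Vec p}

lemma norm_sub_le_of_lt_texit (h₀ : ‖θ t₀ - θstar‖ ≤ r) {t : ℕ} (ht : t₀ ≤ t)
    (hlt : (t : ℕ∞) < texit θstar r t₀ θ) : ‖θ t - θstar‖ ≤ r := by
  rcases ht.eq_or_lt with rfl | ht
  · exact h₀
  by_contra! hout
  exact hlt.not_ge (sInf_le ⟨t, rfl, ht, hout⟩)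

variable {hess : ℕ → Vec p → Mat p} {Ω₀ : Mat p} {Ω : ℕ → Mat p}

-- `θ (max (s - 1) t₀)` is `θ t₀` for the warm-start terms `s ≤ t₀`, the previous iterate afterwards
lemma eq_add_sum_hess_of_recursion (h₀ : Ω t₀ = Ω₀ + ∑ s ∈ Finset.Icc 1 t₀, hess s (θ t₀))
    (hrec : ∀ t, t₀ < t → Ω t = Ω (t - 1) + hess t (θ (t - 1))) {t : ℕ} (ht : t₀ ≤ t) :
    Ω t = Ω₀ + ∑ s ∈ Finset.Icc 1 t, hess s (θ (max (s - 1) t₀)) := by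
  induction t, ht using Nat.le_induction with
  | base =>
    rw [h₀]
    congr 1
    refine Finset.sum_congr rfl fun s hs => ?_
    rw [max_eq_right (by rw [Finset.mem_Icc] at hs; omega)]
  | succ t ht ih =>
    rw [hrec (t + 1) (by omega), Nat.add_sub_cancel, ih, Finset.sum_Icc_succ_top (by omega),
      Nat.add_sub_cancel, max_eq_left ht, add_assoc]

variable {T K₂ : ℝ}

lemma quadForm_add_le_quadForm_of_lt_texit
    (h₀ : Ω t₀ = Ω₀ + ∑ s ∈ Finset.Icc 1 t₀, hess s (θ t₀))
    (hrec : ∀ t, t₀ < t → Ω t = Ω (t - 1) + hess t (θ (t - 1)))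
    (hA1 : HessianSumLowerBound hess θstar r T K₂)
    (hT : T ≤ t₀) (hball : ‖θ t₀ - θstar‖ ≤ r) {t : ℕ} (ht : t₀ ≤ t)
    (hlt : (t : ℕ∞) < texit θstar r t₀ θ) (v : Vec p) :
    quadForm Ω₀ v + K₂ * t * ‖v‖ ^ 2 ≤ quadForm (Ω t) v := by
  rw [eq_add_sum_hess_of_recursion h₀ hrec ht, quadForm_add]
  gcongr
  refine hA1 t (hT.trans (by exact_mod_cast ht)) _ (fun s hs => ?_) v
  refine norm_sub_le_of_lt_texit hball (le_max_right _ _) (lt_of_le_of_lt ?_ hlt)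
  simp only [Finset.mem_Icc] at hs
  exact_mod_cast max_le (by omega) ht

lemma posDef_of_lt_texit (hΩ₀ : Ω₀.PosDef) (hherm : ∀ s y, (hess s y).IsHermitian) (hK₂ : 0 ≤ K₂)
    (h₀ : Ω t₀ = Ω₀ + ∑ s ∈ Finset.Icc 1 t₀, hess s (θ t₀))
    (hrec : ∀ t, t₀ < t → Ω t = Ω (t - 1) + hess t (θ (t - 1)))
    (hA1 : HessianSumLowerBound hess θstar r T K₂)
    (hT : T ≤ t₀) (hball : ‖θ t₀ - θstar‖ ≤ r) {t : ℕ} (ht : t₀ ≤ t)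
    (hlt : (t : ℕ∞) < texit θstar r t₀ θ) : (Ω t).PosDef := by
  have hH : (Ω t).IsHermitian := by
    rw [eq_add_sum_hess_of_recursion h₀ hrec ht]
    exact hΩ₀.isHermitian.add (isSelfAdjoint_sum _ fun s _ => hherm _ _)
  refine hH.posDef_of_quadForm_pos fun v hv => ?_
  have := quadForm_add_le_quadForm_of_lt_texit h₀ hrec hA1 hT hball ht hlt v
  have := hΩ₀.quadForm_pos hv
  nlinarith [mul_nonneg (mul_nonneg hK₂ (Nat.cast_nonneg t)) (sq_nonneg ‖v‖)]

variable {ℓ : ℕ → Vec p → ℝ} {grad : ℕ → Vec p → Vec p} {L₁ L₂ : ℝ}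

lemma quadForm_succ_le_of_lt_texit (hgrad : ∀ t y, HasGradientAt (ℓ t) (grad t y) y)
    (hhess : ∀ t y, HasFDerivAt (grad t)
      (LinearMap.toContinuousLinearMap (Matrix.toEuclideanLin (hess t y))) y)
    (hhessc : ∀ t, Continuous (hess t)) (hΩ₀ : Ω₀.PosDef)
    (h₀ : Ω t₀ = Ω₀ + ∑ s ∈ Finset.Icc 1 t₀, hess s (θ t₀))
    (hrec : ∀ t, t₀ < t → Ω t = Ω (t - 1) + hess t (θ (t - 1)))
    (hθrec : ∀ t, t₀ < t → θ t = θ (t - 1) - mApp (Ω t)⁻¹ (grad t (θ (t - 1))))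
    (hPSD : ∀ t, t₀ < t → (hess t (θ (t - 1))).PosSemidef)
    (hA1 : HessianSumLowerBound hess θstar r T K₂)
    (hA2 : ∀ t, TaylorCurvatureComparable (ℓ t) (grad t) (hess t) θstar r L₁)
    (hspec : ∀ (t : ℕ) (y : Vec p), ‖y - θstar‖ ≤ r → specNorm (hess t y) ≤ L₂)
    (hT : T ≤ t₀) (hball : ‖θ t₀ - θstar‖ ≤ r) (hK₂ : 0 < K₂) (hL₁ : 0 ≤ L₁)
    {t : ℕ} (ht : t₀ ≤ t) (ht₀ : 1 ≤ t₀) (hlt : (t : ℕ∞) < texit θstar r t₀ θ) :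
    quadForm (Ω (t + 1)) (θ (t + 1) - θstar) ≤ quadForm (Ω t) (θ t - θstar)
      + L₁ * L₂ / K₂ ^ (3 / 2 : ℝ) * (1 / (t : ℝ) ^ (3 / 2 : ℝ))
        * quadForm (Ω t) (θ t - θstar) ^ (3 / 2 : ℝ)
      + (2 * (ℓ (t + 1) θstar - ℓ (t + 1) (θ t)) + quadForm (Ω (t + 1))⁻¹ (grad (t + 1) (θ t))) := by
  have hθ := hθrec (t + 1) (by omega)
  have hΩ := hrec (t + 1) (by omega)
  have hH := hPSD (t + 1) (by omega)
  simp only [Nat.add_sub_cancel] at hθ hΩ hH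
  have hherm := fun s => isHermitian_of_hasFDerivAt_gradient (hgrad s) (hhess s)
  have hPD := (posDef_of_lt_texit hΩ₀ hherm hK₂.le h₀ hrec hA1 hT hball ht hlt).add_posSemidef hH
  have hlow := quadForm_add_le_quadForm_of_lt_texit h₀ hrec hA1 hT hball ht hlt (θ t - θstar)
  have hΩ₀δ := hΩ₀.posSemidef.quadForm_nonneg (θ t - θstar)
  have hy := norm_sub_le_of_lt_texit hball ht hlt
  have hL₂ : 0 ≤ L₂ := (norm_nonneg _).trans (hspec (t + 1) _ hy)
  rw [hθ, hΩ]
  refine (quadForm_newtonStep_le (hgrad _) (hhess _) (hhessc _) hL₁ (hA2 _) (hspec _) hy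
    hPD).trans ?_
  gcongr _ + ?_ + _
  calc L₁ * L₂ * ‖θ t - θstar‖ ^ 3
      ≤ L₁ * L₂ * (quadForm (Ω t) (θ t - θstar) ^ (3 / 2 : ℝ) / (K₂ * t) ^ (3 / 2 : ℝ)) := by
        gcongr
        exact pow_three_le_rpow_div (mul_pos hK₂ (Nat.cast_pos.mpr (ht₀.trans ht))) (norm_nonneg _)
          (by linarith)
    _ = _ := by rw [mul_rpow hK₂.le (Nat.cast_nonneg t)]; ring

end Algorithm

end

/-- The quantifier order encodes the dependencies: `K = K(K₂, L₁, L₂)`,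
`K' = K'(K₄)`, `K'' = K''(K₃, K₅)`, `M = M(K₁,…,K₅, L₁, L₂, C₀, r)`. -/
theorem stmt3 :
    ∀ K₂ L₁ L₂ : ℝ, 0 < K₂ → 0 ≤ L₁ → 0 < L₂ →
    ∃ K : ℝ, 0 < K ∧
    ∀ K₄ : ℝ, 0 < K₄ →
    ∃ K' : ℝ, 0 < K' ∧
    ∀ K₃ K₅ : ℝ, 0 < K₃ → 0 < K₅ →
    ∃ K'' : ℝ, 0 < K'' ∧
    ∀ K₁ C₀ r : ℝ, 0 < K₁ → 0 < C₀ → 0 < r →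
    ∃ M : ℝ, 0 < M ∧
    ∀ (p : ℕ) (x : ℝ) (θstar : Vec p) (ℓ : ℕ → Vec p → ℝ)
      (grad : ℕ → Vec p → Vec p) (hess : ℕ → Vec p → Mat p)
      (t₀ : ℕ) (Ω₀ : Mat p) (θ : ℕ → Vec p) (Ω : ℕ → Mat p),
      0 < x →
      -- ℓ_t is C² with gradient `grad` and Hessian `hess`
      (∀ t y, HasGradientAt (ℓ t) (grad t y) y) →
      (∀ t y, HasFDerivAt (grad t)
        (LinearMap.toContinuousLinearMap (Matrix.toEuclideanLin (hess t y))) y) →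
      (∀ t, Continuous (hess t)) →
      -- algorithm
      Ω₀.PosDef →
      Ω t₀ = Ω₀ + ∑ s ∈ Finset.Icc 1 t₀, hess s (θ t₀) →
      (∀ t, t₀ < t → Ω t = Ω (t - 1) + hess t (θ (t - 1))) →
      (∀ t, t₀ < t → θ t = θ (t - 1) - mApp (Ω t)⁻¹ (grad t (θ (t - 1)))) →
      (∀ t, t₀ < t → (hess t (θ (t - 1))).PosSemidef) →
      -- (A1): λ_min(Σ_{s≤t} ∇²ℓ_s(θ̄_s)) ≥ K₂ t uniformly over Θ_r-valued sequences
      (∀ t : ℕ, K₁ * (p + x) ≤ (t : ℝ) → ∀ θbar : ℕ → Vec p,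
        (∀ s ∈ Finset.Icc 1 t, ‖θbar s - θstar‖ ≤ r) →
        ∀ v : Vec p, K₂ * t * ‖v‖ ^ 2 ≤
          quadForm (∑ s ∈ Finset.Icc 1 t, hess s (θbar s)) v) →
      -- (A2): exact second-order Taylor expansion with comparable curvature
      (∀ (t : ℕ) (θ₁ θ₂ : Vec p), ‖θ₁ - θstar‖ ≤ r → ‖θ₂ - θstar‖ ≤ r →
        ∃ φ : ℝ, 0 ≤ φ ∧ φ ≤ L₁ * ‖θ₁ - θ₂‖ ∧ ∃ c ∈ Set.Icc (0 : ℝ) 1,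
          ℓ t θ₁ = ℓ t θ₂ + ⟪grad t θ₂, θ₁ - θ₂⟫
              + (1 / 2) * quadForm (hess t (θ₂ + c • (θ₁ - θ₂))) (θ₁ - θ₂) ∧
          ((1 + φ) • hess t (θ₂ + c • (θ₁ - θ₂)) - hess t θ₁).PosSemidef) →
      (∀ (t : ℕ) (y : Vec p), ‖y - θstar‖ ≤ r → specNorm (hess t y) ≤ L₂) →
      -- (A4)
      K₁ * (p + x) ≤ (t₀ : ℝ) →
      (∀ t : ℕ, t₀ < t →
        ∑ s ∈ Finset.Icc (t₀ + 1) t, (ℓ s θstar - ℓ s (θ (s - 1))) ≤ K₃ * x) →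
      (∀ t : ℕ, t₀ < t → (t : ℕ∞) ≤ texit θstar r t₀ θ →
        ∑ s ∈ Finset.Icc (t₀ + 1) t, quadForm (Ω s)⁻¹ (grad s (θ (s - 1)))
          ≤ K₄ * p * Real.log t + K₅ * (x + Real.log t)) →
      -- (A5)
      ‖θ t₀ - θstar‖ ≤ r →
      quadForm (Ω t₀) (θ t₀ - θstar) ≤ C₀ * (p + x) →
      -- warm-start length
      ⌈M * (p * Real.log (max (p : ℝ) 3) + x)⌉₊ ≤ t₀ →
      -- conclusion
      ∃ ε u : ℕ → ℝ,
        (∀ t, t₀ ≤ t → 0 ≤ ε t) ∧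
        (∀ t : ℕ, t₀ ≤ t → (t : ℕ∞) < texit θstar r t₀ θ →
          quadForm (Ω (t + 1)) (θ (t + 1) - θstar)
            ≤ quadForm (Ω t) (θ t - θstar)
              + ε t * (quadForm (Ω t) (θ t - θstar)) ^ ((3 : ℝ) / 2)
              + u (t + 1)) ∧
        (∀ s t : ℕ, t₀ ≤ s → s < t → (t : ℕ∞) ≤ texit θstar r t₀ θ →
          ∑ r' ∈ Finset.Icc s t, ε r' ≤ K / Real.sqrt s) ∧
        (∀ s t : ℕ, t₀ ≤ s → s < t → (t : ℕ∞) ≤ texit θstar r t₀ θ →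
          ∑ r' ∈ Finset.Icc (t₀ + 1) t, u r'
            ≤ K' * p * Real.log t + K'' * (x + Real.log t)) := by
  intro K₂ L₁ L₂ hK₂ hL₁ hL₂
  refine ⟨3 * (L₁ * L₂ / K₂ ^ (3 / 2 : ℝ)) + 1, by positivity, fun K₄ hK₄ => ⟨K₄, hK₄,
    fun K₃ K₅ hK₃ hK₅ => ⟨2 * K₃ + K₅, by positivity, fun K₁ C₀ r hK₁ _ _ => ⟨1, one_pos, ?_⟩⟩⟩⟩
  intro p x θstar ℓ grad hess t₀ Ω₀ θ Ω hx hgrad hhess hhessc hΩ₀ hΩt₀ hΩrec hθrec hPSD hA1 hA2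
    hspec hwarm hA4ℓ hA4g hball _ _
  have ht₀ : 1 ≤ t₀ := Nat.cast_pos.mp ((show (0 : ℝ) < K₁ * (p + x) by positivity).trans_le hwarm)
  refine ⟨fun t => L₁ * L₂ / K₂ ^ (3 / 2 : ℝ) * (1 / (t : ℝ) ^ (3 / 2 : ℝ)),
    fun s => 2 * (ℓ s θstar - ℓ s (θ (s - 1))) + quadForm (Ω s)⁻¹ (grad s (θ (s - 1))),
    fun t _ => by positivity, fun t ht hlt => ?_, fun s t hs _ _ => ?_, fun s t hs hst hle => ?_⟩
  · simpa using quadForm_succ_le_of_lt_texit hgrad hhess hhessc hΩ₀ hΩt₀ hΩrec hθrec hPSD hA1 hA2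
      hspec hwarm hball hK₂ hL₁ ht ht₀ hlt
  · rw [← Finset.mul_sum]
    calc _ ≤ L₁ * L₂ / K₂ ^ (3 / 2 : ℝ) * (3 / √s) := by
          gcongr; exact sum_Icc_one_div_rpow_three_halves_le (ht₀.trans hs) t
      _ ≤ _ := by rw [mul_div_assoc']; gcongr; linarith
  · have := hA4ℓ t (by omega)
    have := hA4g t (by omega) hle
    have := mul_nonneg hK₃.le (Real.log_natCast_nonneg t)
    rw [Finset.sum_add_distrib, ← Finset.mul_sum]
    linarith
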